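/- Let μ ∈ (0,1) and define [f]_{^μ} = sup_{0<s<u≤1} Δ(f;s,(s+u)/2,u)/(u-s)^μ (midpoint Hölder seminorm) and [f]_{~μ} = sup_{η>0} N(f;η)/η^μ. Then for any f ∈ D^μ([0,1],E), [f]_{^μ} ≤ [f]_μ ≤ 2[f]_{~μ} ≤ (2/(1−2^{−μ}))·[f]_{^μ}. In particular the midpoint seminorm [f]_{^μ} is equivalent to the full seminorm [f]_μ = sup_{0≤s≤t≤u≤1} Δ(f;s,t,u)/(u−s)^μ. -/

import Mathlib

open MeasureTheory Set Filter

noncomputable section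

/-- `f` is càdlàg on `[0,1]`: right-continuous on `[0,1)` and with left limits on `(0,1]`. -/
def IsCadlagOn {E : Type*} [MetricSpace E] (f : ℝ → E) : Prop :=
  (∀ t ∈ Set.Ico (0:ℝ) 1, ContinuousWithinAt f (Set.Ici t) t) ∧
  (∀ t ∈ Set.Ioc (0:ℝ) 1, ∃ l : E, Filter.Tendsto f (nhdsWithin t (Set.Iio t)) (nhds l))

/-- `Δ(f;s,t,u) = d(f(s),f(t)) ∧ d(f(t),f(u))`. -/
def tripleDelta {E : Type*} [MetricSpace E] (f : ℝ → E) (s t u : ℝ) : ℝ :=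
  min (dist (f s) (f t)) (dist (f t) (f u))

/-- Standard modulus of càdlàguity `Δ(f;(σ,τ))`. -/
def deltaMod {E : Type*} [MetricSpace E] (f : ℝ → E) (σ τ : ℝ) : ℝ :=
  sSup {x : ℝ | ∃ s t u : ℝ, σ ≤ s ∧ s ≤ t ∧ t ≤ u ∧ u ≤ τ ∧ x = tripleDelta f s t u}

/-- Fernique's modulus `N(f;(σ,τ))`. -/
def fernMod {E : Type*} [MetricSpace E] (f : ℝ → E) (σ τ : ℝ) : ℝ :=
  sInf {x : ℝ | ∃ θ : ℝ, σ < θ ∧ θ ≤ τ ∧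
    x = sSup {y : ℝ | ∃ s u : ℝ, σ ≤ s ∧ s < θ ∧ θ ≤ u ∧ u ≤ τ ∧
      y = max (dist (f σ) (f s)) (dist (f u) (f τ))}}

/-- `N(f;η) = sup_{0 < τ - σ ≤ η} N(f;(σ,τ))` (with `0 ≤ σ < τ ≤ 1`). -/
def fernEta {E : Type*} [MetricSpace E] (f : ℝ → E) (η : ℝ) : ℝ :=
  sSup {x : ℝ | ∃ σ τ : ℝ, 0 ≤ σ ∧ σ < τ ∧ τ ≤ 1 ∧ τ - σ ≤ η ∧ x = fernMod f σ τ}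

/-- The set of quotients defining `[f]_μ`. -/
def holderSet {E : Type*} [MetricSpace E] (μ : ℝ) (f : ℝ → E) : Set ℝ :=
  {x : ℝ | ∃ s t u : ℝ, 0 ≤ s ∧ s ≤ t ∧ t ≤ u ∧ u ≤ 1 ∧
    x = tripleDelta f s t u / (u - s) ^ μ}

/-- `[f]_μ`. -/
def holderSemi {E : Type*} [MetricSpace E] (μ : ℝ) (f : ℝ → E) : ℝ :=
  sSup (holderSet μ f)

/-- The set of quotients defining `|f]_μ`. -/
def leftSet {E : Type*} [MetricSpace E] (μ : ℝ) (f : ℝ → E) : Set ℝ :=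
  {x : ℝ | ∃ t : ℝ, 0 < t ∧ t ≤ 1 ∧ x = dist (f 0) (f t) / t ^ μ}

/-- `|f]_μ = sup_{t ∈ (0,1]} d(f(0),f(t))/t^μ`. -/
def leftSemi {E : Type*} [MetricSpace E] (μ : ℝ) (f : ℝ → E) : ℝ :=
  sSup (leftSet μ f)

/-- The set of quotients defining `[f|_μ`. -/
def rightSet {E : Type*} [MetricSpace E] (μ : ℝ) (f : ℝ → E) : Set ℝ :=
  {x : ℝ | ∃ t : ℝ, 0 ≤ t ∧ t < 1 ∧ x = dist (f 1) (f t) / (1 - t) ^ μ}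

/-- `[f|_μ = sup_{t ∈ [0,1)} d(f(1),f(t))/(1-t)^μ`. -/
def rightSemi {E : Type*} [MetricSpace E] (μ : ℝ) (f : ℝ → E) : ℝ :=
  sSup (rightSet μ f)

/-- `[f]_{~μ} = sup_{η > 0} N(f;η)/η^μ`. -/
def tildeSemi {E : Type*} [MetricSpace E] (μ : ℝ) (f : ℝ → E) : ℝ :=
  sSup {x : ℝ | ∃ η : ℝ, 0 < η ∧ x = fernEta f η / η ^ μ}

/-- `[f]_{^μ} = sup_{0 < s < u ≤ 1} Δ(f;s,(s+u)/2,u)/(u-s)^μ`. -/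
def midSemi {E : Type*} [MetricSpace E] (μ : ℝ) (f : ℝ → E) : ℝ :=
  sSup {x : ℝ | ∃ s u : ℝ, 0 < s ∧ s < u ∧ u ≤ 1 ∧
    x = tripleDelta f s ((s + u) / 2) u / (u - s) ^ μ}

/-- Membership in `D^μ([0,1],E)`: càdlàg with finite Hölder-type seminorms. -/
def MemDHolder {E : Type*} [MetricSpace E] (μ : ℝ) (f : ℝ → E) : Prop :=
  IsCadlagOn f ∧ BddAbove (holderSet μ f) ∧ BddAbove (leftSet μ f) ∧
    BddAbove (rightSet μ f)

/-- `[[f]]_{μ,p}^p`, the triple-integral quantity. -/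
def tripleIntP {E : Type*} [MetricSpace E] (μ p : ℝ) (f : ℝ → E) : ℝ :=
  ∫ q in {q : ℝ × ℝ × ℝ | 0 ≤ q.1 ∧ q.1 < q.2.1 ∧ q.2.1 < q.2.2 ∧ q.2.2 ≤ 1},
    tripleDelta f q.1 q.2.1 q.2.2 ^ p / (q.2.2 - q.1) ^ (μ * p + 3)

/-- `[[f]]_{μ,p}`. -/
def tripleSemi {E : Type*} [MetricSpace E] (μ p : ℝ) (f : ℝ → E) : ℝ :=
  tripleIntP μ p f ^ (1 / p)

/-- `||f]]_{μ,p}^p`. -/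
def leftIntP {E : Type*} [MetricSpace E] (μ p : ℝ) (f : ℝ → E) : ℝ :=
  ∫ t in (0:ℝ)..1, dist (f 0) (f t) ^ p / t ^ (μ * p + 1)

/-- `||f]]_{μ,p}`. -/
def leftIntSemi {E : Type*} [MetricSpace E] (μ p : ℝ) (f : ℝ → E) : ℝ :=
  leftIntP μ p f ^ (1 / p)

/-- `[[f||_{μ,p}^p`. -/
def rightIntP {E : Type*} [MetricSpace E] (μ p : ℝ) (f : ℝ → E) : ℝ :=
  ∫ t in (0:ℝ)..1, dist (f 1) (f t) ^ p / (1 - t) ^ (μ * p + 1)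

/-- `[[f||_{μ,p}`. -/
def rightIntSemi {E : Type*} [MetricSpace E] (μ p : ℝ) (f : ℝ → E) : ℝ :=
  rightIntP μ p f ^ (1 / p)

/-- The sup over `[0,1]` of the norm of an `ℝ^d`-valued function. -/
def supNorm {k : ℕ} (f : ℝ → EuclideanSpace ℝ (Fin k)) : ℝ :=
  sSup {x : ℝ | ∃ t : ℝ, 0 ≤ t ∧ t ≤ 1 ∧ x = ‖f t‖}

/-- Dyadic projection `π_n`. -/
def dyadicProj (n : ℕ) (t : ℝ) : ℝ :=
  if t = 1 then 1 - 1 / 2 ^ n else (⌊t * 2 ^ n⌋ : ℝ) / 2 ^ n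

open Topology

/-!
The midpoint quotients are among those defining `[f]_μ`, and `Δ(f;s,t,u) ≤ N(f;(s,u))` because,
whichever side of a split point `θ` the middle point `t` lies on, one of the two distances in `Δ`
is among those that `N` maximises over.

For the last inequality, bisect `[σ,τ]`: the midpoint costs `[f]_{^μ} (τ-σ)^μ` and hands the
estimate over to a half interval, where everything is scaled by `2^{-μ}`. Hence
`d(f σ, f a) ∧ d(f b, f τ) ≤ [f]_{^μ} (τ-σ)^μ / (1 - 2^{-μ})` for dyadic `a ≤ b`, and for all
`a ≤ b` by right-continuity. Splitting `[σ,τ]` where `f` first leaves the ball of that radius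
around `f σ` turns this two-point bound into the same bound for `N(f;(σ,τ))`.
-/

section Chaining

variable {E : Type*} [MetricSpace E]

lemma one_sub_two_rpow_neg_pos {μ : ℝ} (hμ : 0 < μ) : 0 < 1 - (2 : ℝ) ^ (-μ) :=
  sub_pos.mpr (Real.rpow_lt_one_of_one_lt_of_neg one_lt_two (neg_neg_of_pos hμ))

/-- For `x ∈ [α, β]`, the least point `≥ x` of the grid `α + j (β - α) / 2 ^ n`, `j ≤ 2 ^ n`,
found by bisection. -/
def dyadicCeil : ℕ → ℝ → ℝ → ℝ → ℝ
  | 0, α, β, x => if x ≤ α then α else β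
  | n + 1, α, β, x =>
    if x ≤ (α + β) / 2 then dyadicCeil n α ((α + β) / 2) x else dyadicCeil n ((α + β) / 2) β x

lemma dyadicCeil_mem_Icc (n : ℕ) {α β x : ℝ} (hx : x ∈ Icc α β) :
    dyadicCeil n α β x ∈ Icc x (x + (β - α) / 2 ^ n) := by
  induction n generalizing α β with
  | zero =>
    simp only [dyadicCeil, pow_zero, div_one]
    split_ifs with h
    all_goals constructor <;> linarith [hx.1, hx.2]
  | succ n ih =>
    have hhalf : ((α + β) / 2 - α) / 2 ^ n = (β - α) / 2 ^ (n + 1) := by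
      rw [pow_succ]; field_simp; ring
    have hhalf' : (β - (α + β) / 2) / 2 ^ n = (β - α) / 2 ^ (n + 1) := by
      rw [pow_succ]; field_simp; ring
    simp only [dyadicCeil]
    split_ifs with h
    · simpa only [hhalf] using ih ⟨hx.1, h⟩
    · simpa only [hhalf'] using ih ⟨(not_le.mp h).le, hx.2⟩

lemma tendsto_dyadicCeil {α β x : ℝ} (hx : x ∈ Icc α β) :
    Tendsto (fun n => dyadicCeil n α β x) atTop (𝓝[≥] x) := by
  have hgrid : Tendsto (fun n : ℕ => x + (β - α) / 2 ^ n) atTop (𝓝 x) := by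
    simpa only [add_zero] using tendsto_const_nhds.add
      (tendsto_const_nhds.div_atTop (tendsto_pow_atTop_atTop_of_one_lt (one_lt_two (α := ℝ))))
  refine tendsto_nhdsWithin_iff.mpr ⟨?_, Eventually.of_forall fun n => (dyadicCeil_mem_Icc n hx).1⟩
  exact tendsto_of_tendsto_of_tendsto_of_le_of_le tendsto_const_nhds hgrid
    (fun n => (dyadicCeil_mem_Icc n hx).1) (fun n => (dyadicCeil_mem_Icc n hx).2)

lemma mul_half_rpow {K t μ : ℝ} (ht : 0 ≤ t) : K * (t / 2) ^ μ = K * t ^ μ * 2 ^ (-μ) := by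
  rw [Real.div_rpow ht zero_le_two, Real.rpow_neg zero_le_two]
  ring

lemma min_dist_le_of_near_mid {a b m X Y : E} {A S : ℝ} (hA : 0 ≤ A)
    (hm : min (dist a m) (dist m b) ≤ A)
    (h : dist a X ≤ S ∨ dist Y b ≤ S ∨ (dist X m ≤ S ∧ dist Y m ≤ S)) :
    min (dist a X) (dist Y b) ≤ A + S := by
  rcases h with h | h | ⟨hX, hY⟩
  · exact min_le_of_left_le (by linarith)
  · exact min_le_of_right_le (by linarith)
  · rcases min_le_iff.mp hm with hm | hm
    · exact min_le_of_left_le (by linarith [dist_triangle a m X, dist_comm X m])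
    · exact min_le_of_right_le (by linarith [dist_triangle Y m b])

variable {f : ℝ → E} {μ M : ℝ}

/-- Chaining along the bisection: the constant `M / (1 - 2 ^ (-μ))` is the fixed point of
`K ↦ M + 2 ^ (-μ) K`, which is what one level of bisection costs. -/
lemma min_dist_dyadicCeil_le (hμ : 0 < μ) (hM : 0 ≤ M) (n : ℕ) :
    ∀ {α β : ℝ}, α < β →
      (∀ s u, α ≤ s → s < u → u ≤ β → tripleDelta f s ((s + u) / 2) u ≤ M * (u - s) ^ μ) →
      ∀ ⦃x y : ℝ⦄, x ≤ y →
        min (dist (f α) (f (dyadicCeil n α β x))) (dist (f (dyadicCeil n α β y)) (f β)) ≤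
          M / (1 - 2 ^ (-μ)) * (β - α) ^ μ := by
  have hr := one_sub_two_rpow_neg_pos hμ
  induction n with
  | zero =>
    intro α β hαβ _ x y hxy
    have hK : 0 ≤ M / (1 - 2 ^ (-μ)) * (β - α) ^ μ :=
      mul_nonneg (div_nonneg hM hr.le) (Real.rpow_nonneg (sub_nonneg.mpr hαβ.le) μ)
    simp only [dyadicCeil]
    by_cases hx : x ≤ α
    · rw [if_pos hx]
      exact min_le_of_left_le (by rw [dist_self]; exact hK)
    · rw [if_neg fun hy => hx (hxy.trans hy)]
      exact min_le_of_right_le (by rw [dist_self]; exact hK)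
  | succ n ih =>
    intro α β hαβ hmid x y hxy
    set m := (α + β) / 2 with hm
    have hL := ih (α := α) (β := m) (by linarith [hm])
      fun s u hs hsu hu => hmid s u hs hsu (by linarith [hm])
    have hR := ih (α := m) (β := β) (by linarith [hm])
      fun s u hs hsu hu => hmid s u (by linarith [hm]) hsu hu
    rw [show m - α = (β - α) / 2 by rw [hm]; ring, mul_half_rpow (by linarith)] at hL
    rw [show β - m = (β - α) / 2 by rw [hm]; ring, mul_half_rpow (by linarith)] at hR
    have hsum : M / (1 - 2 ^ (-μ)) * (β - α) ^ μ =
        M * (β - α) ^ μ + M / (1 - 2 ^ (-μ)) * (β - α) ^ μ * 2 ^ (-μ) := by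
      field_simp; ring
    rw [hsum]
    refine min_dist_le_of_near_mid (mul_nonneg hM (Real.rpow_nonneg (by linarith) μ))
      (hmid α β le_rfl hαβ le_rfl) ?_
    simp only [dyadicCeil, ← hm]
    by_cases hym : y ≤ m
    · have hxm := hxy.trans hym
      rw [if_pos hxm, if_pos hym]
      rcases min_le_iff.mp (hL hxy) with h | hY
      · exact Or.inl h
      rcases min_le_iff.mp (hL le_rfl) with h | hX
      · exact Or.inl h
      exact Or.inr (Or.inr ⟨hX, hY⟩)
    by_cases hxm : x ≤ m
    · rw [if_pos hxm, if_neg hym]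
      rcases min_le_iff.mp (hL (le_refl x)) with h | hX
      · exact Or.inl h
      rcases min_le_iff.mp (hR (le_refl y)) with hY | h
      · exact Or.inr (Or.inr ⟨hX, dist_comm (f m) _ ▸ hY⟩)
      exact Or.inr (Or.inl h)
    · rw [if_neg hxm, if_neg hym]
      rcases min_le_iff.mp (hR hxy) with hX | h
      · rcases min_le_iff.mp (hR (le_refl y)) with hY | h
        · exact Or.inr (Or.inr ⟨dist_comm (f m) _ ▸ hX, dist_comm (f m) _ ▸ hY⟩)
        exact Or.inr (Or.inl h)
      exact Or.inr (Or.inl h)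

lemma min_dist_le_of_midpoint (hμ : 0 < μ) (hM : 0 ≤ M) {σ τ a b : ℝ} (hστ : σ < τ)
    (hrc : ∀ t ∈ Ico σ τ, ContinuousWithinAt f (Ici t) t)
    (hmid : ∀ s u, σ ≤ s → s < u → u ≤ τ → tripleDelta f s ((s + u) / 2) u ≤ M * (u - s) ^ μ)
    (hσa : σ ≤ a) (hab : a ≤ b) (hbτ : b ≤ τ) :
    min (dist (f σ) (f a)) (dist (f b) (f τ)) ≤ M / (1 - 2 ^ (-μ)) * (τ - σ) ^ μ := by
  rcases hbτ.eq_or_lt with rfl | hbτ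
  · rw [dist_self]
    exact min_le_of_right_le <| mul_nonneg (div_nonneg hM (one_sub_two_rpow_neg_pos hμ).le)
      (Real.rpow_nonneg (sub_nonneg.mpr hστ.le) μ)
  have happrox : ∀ c ∈ Icc σ b, Tendsto (fun n => f (dyadicCeil n σ τ c)) atTop (𝓝 (f c)) :=
    fun c hc => (hrc c ⟨hc.1, hc.2.trans_lt hbτ⟩).tendsto.comp
      (tendsto_dyadicCeil ⟨hc.1, hc.2.trans hbτ.le⟩)
  exact le_of_tendsto'
    ((tendsto_const_nhds.dist (happrox a ⟨hσa, hab⟩)).min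
      ((happrox b ⟨hσa.trans hab, le_rfl⟩).dist tendsto_const_nhds))
    fun n => min_dist_dyadicCeil_le hμ hM n hστ hmid hab

end Chaining

section Fernique

variable {E : Type*} [MetricSpace E] {f : ℝ → E}

lemma le_apply_sInf_of_forall_le {A : Set ℝ} {g : ℝ → ℝ} {c : ℝ} (hA : A.Nonempty)
    (hAbdd : BddBelow A) (hg : ContinuousWithinAt g (Ici (sInf A)) (sInf A))
    (hc : ∀ t ∈ A, c ≤ g t) : c ≤ g (sInf A) :=
  ContinuousWithinAt.closure_le (csInf_mem_closure hA hAbdd) continuousWithinAt_const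
    (hg.mono fun _ ht => csInf_le hAbdd ht) hc

/-- `θ` is the first time `f` leaves the ball of radius `C'` around `f σ`. For `u ≥ θ` some
`t ≤ u` has `f t` outside the ball (`t = θ` by right-continuity when the infimum is not attained),
and the two-point bound at `(t, u)` then controls `dist (f u) (f τ)`. -/
lemma exists_split_of_min_dist_le {σ τ C C' : ℝ} (hστ : σ < τ)
    (hrc : ∀ t ∈ Ico σ τ, ContinuousWithinAt f (Ici t) t)
    (hC : ∀ a b, σ ≤ a → a ≤ b → b ≤ τ → min (dist (f σ) (f a)) (dist (f b) (f τ)) ≤ C)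
    (hCC' : C < C') :
    ∃ θ ∈ Ioc σ τ, (∀ s ∈ Ico σ θ, dist (f σ) (f s) ≤ C') ∧
      ∀ u ∈ Icc θ τ, dist (f u) (f τ) ≤ C' := by
  have hC' : 0 < C' := by
    have := hC σ σ le_rfl le_rfl hστ.le
    rw [dist_self, min_eq_left dist_nonneg] at this
    linarith
  set A := {t ∈ Icc σ τ | C' < dist (f σ) (f t)}
  rcases A.eq_empty_or_nonempty with hA | hA
  · refine ⟨τ, ⟨hστ, le_rfl⟩, fun s hs => ?_, fun u hu => ?_⟩
    · exact not_lt.mp fun h => hA.subset ⟨⟨hs.1, hs.2.le⟩, h⟩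
    · rw [le_antisymm hu.2 hu.1, dist_self]
      exact hC'.le
  have hAbdd : BddBelow A := ⟨σ, fun t ht => ht.1.1⟩
  set θ := sInf A
  have hσθ : σ ≤ θ := le_csInf hA fun t ht => ht.1.1
  have hθτ : θ ≤ τ := (csInf_le hAbdd hA.some_mem).trans hA.some_mem.1.2
  have hfar : θ < τ → C' ≤ dist (f σ) (f θ) := fun hθ =>
    le_apply_sInf_of_forall_le (g := fun t => dist (f σ) (f t)) hA hAbdd
      (tendsto_const_nhds.dist (hrc θ ⟨hσθ, hθ⟩)) fun t ht => ht.2.le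
  have hθ : σ < θ := by
    rcases hθτ.eq_or_lt with h | h
    · exact h ▸ hστ
    · refine hσθ.lt_of_ne fun h' => ?_
      have := hfar h
      rw [← h', dist_self] at this
      linarith
  refine ⟨θ, ⟨hθ, hθτ⟩, fun s hs => ?_, fun u hu => ?_⟩
  · exact not_lt.mp fun h => notMem_of_lt_csInf hs.2 hAbdd ⟨⟨hs.1, hs.2.le.trans hθτ⟩, h⟩
  rcases hu.2.eq_or_lt with rfl | huτ
  · rw [dist_self]
    exact hC'.le
  obtain ⟨t, ht, htu, hfar_t⟩ : ∃ t, σ ≤ t ∧ t ≤ u ∧ C' ≤ dist (f σ) (f t) := by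
    rcases hu.1.eq_or_lt with rfl | hθu
    · exact ⟨θ, hσθ, le_rfl, hfar huτ⟩
    · obtain ⟨t, htA, htu⟩ := exists_lt_of_csInf_lt hA hθu
      exact ⟨t, htA.1.1, htu.le, htA.2.le⟩
  rcases min_le_iff.mp (hC t u ht htu hu.2) with h | h
  · linarith
  · linarith

lemma fernMod_nonneg (σ τ : ℝ) : 0 ≤ fernMod f σ τ :=
  Real.sInf_nonneg <| by
    rintro _ ⟨θ, -, -, rfl⟩
    exact Real.sSup_nonneg <| by
      rintro _ ⟨s, u, -, -, -, -, rfl⟩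
      exact le_max_of_le_left dist_nonneg

lemma fernMod_le_of_split {σ τ θ c : ℝ} (hc : 0 ≤ c) (hθ : θ ∈ Ioc σ τ)
    (hleft : ∀ s ∈ Ico σ θ, dist (f σ) (f s) ≤ c) (hright : ∀ u ∈ Icc θ τ, dist (f u) (f τ) ≤ c) :
    fernMod f σ τ ≤ c := by
  unfold fernMod
  refine le_trans (csInf_le ?_ ⟨θ, hθ.1, hθ.2, rfl⟩) (Real.sSup_le ?_ hc)
  · refine ⟨0, ?_⟩
    rintro _ ⟨θ, -, -, rfl⟩
    exact Real.sSup_nonneg <| by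
      rintro _ ⟨s, u, -, -, -, -, rfl⟩
      exact le_max_of_le_left dist_nonneg
  · rintro _ ⟨s, u, hs, hsθ, hθu, hu, rfl⟩
    exact max_le (hleft s ⟨hs, hsθ⟩) (hright u ⟨hθu, hu⟩)

lemma fernMod_le_of_min_dist_le {σ τ C : ℝ} (hστ : σ < τ)
    (hrc : ∀ t ∈ Ico σ τ, ContinuousWithinAt f (Ici t) t)
    (hC : ∀ a b, σ ≤ a → a ≤ b → b ≤ τ → min (dist (f σ) (f a)) (dist (f b) (f τ)) ≤ C) :
    fernMod f σ τ ≤ C := by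
  refine le_of_forall_gt_imp_ge_of_dense fun C' hCC' => ?_
  obtain ⟨θ, hθ, hleft, hright⟩ := exists_split_of_min_dist_le hστ hrc hC hCC'
  exact fernMod_le_of_split ((hleft σ ⟨le_rfl, hθ.1⟩).trans' dist_nonneg) hθ hleft hright

lemma fernMod_le_of_midpoint {μ M σ τ : ℝ} (hμ : 0 < μ) (hM : 0 ≤ M) (hστ : σ < τ)
    (hrc : ∀ t ∈ Ico σ τ, ContinuousWithinAt f (Ici t) t)
    (hmid : ∀ s u, σ ≤ s → s < u → u ≤ τ → tripleDelta f s ((s + u) / 2) u ≤ M * (u - s) ^ μ) :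
    fernMod f σ τ ≤ M / (1 - 2 ^ (-μ)) * (τ - σ) ^ μ :=
  fernMod_le_of_min_dist_le hστ hrc fun _ _ hσa hab hbτ =>
    min_dist_le_of_midpoint hμ hM hστ hrc hmid hσa hab hbτ

lemma tripleDelta_le_fernMod {s t u : ℝ} (hb : Bornology.IsBounded (f '' Icc s u))
    (hst : s ≤ t) (htu : t ≤ u) (hsu : s < u) : tripleDelta f s t u ≤ fernMod f s u := by
  obtain ⟨R, hR⟩ := Metric.isBounded_iff.mp hb
  have hfR : ∀ x ∈ Icc s u, ∀ y ∈ Icc s u, dist (f x) (f y) ≤ R := fun x hx y hy =>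
    hR (mem_image_of_mem f hx) (mem_image_of_mem f hy)
  refine le_csInf ⟨_, u, hsu, le_rfl, rfl⟩ ?_
  rintro _ ⟨θ, hsθ, hθu, rfl⟩
  have hbdd : BddAbove {y | ∃ s' u', s ≤ s' ∧ s' < θ ∧ θ ≤ u' ∧ u' ≤ u ∧
      y = max (dist (f s) (f s')) (dist (f u') (f u))} := by
    refine ⟨R, ?_⟩
    rintro _ ⟨s', u', hs', hs'θ, hθu', hu', rfl⟩
    exact max_le (hfR s ⟨le_rfl, hsu.le⟩ s' ⟨hs', by linarith⟩)
      (hfR u' ⟨by linarith, hu'⟩ u ⟨hsu.le, le_rfl⟩)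
  by_cases htθ : t < θ
  · exact (min_le_left _ _).trans <| (le_max_left _ (dist (f u) (f u))).trans <|
      le_csSup hbdd ⟨t, u, hst, htθ, hθu, le_rfl, rfl⟩
  · exact (min_le_right _ _).trans <| (le_max_right (dist (f s) (f s)) _).trans <|
      le_csSup hbdd ⟨s, t, le_rfl, hsθ, not_lt.mp htθ, htu, rfl⟩

end Fernique

section Seminorms

variable {E : Type*} [MetricSpace E] {μ : ℝ} {f : ℝ → E}

def midSet (μ : ℝ) (f : ℝ → E) : Set ℝ :=
  {x : ℝ | ∃ s u : ℝ, 0 < s ∧ s < u ∧ u ≤ 1 ∧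
    x = tripleDelta f s ((s + u) / 2) u / (u - s) ^ μ}

def fernSet (f : ℝ → E) (η : ℝ) : Set ℝ :=
  {x : ℝ | ∃ σ τ : ℝ, 0 ≤ σ ∧ σ < τ ∧ τ ≤ 1 ∧ τ - σ ≤ η ∧ x = fernMod f σ τ}

def tildeSet (μ : ℝ) (f : ℝ → E) : Set ℝ :=
  {x : ℝ | ∃ η : ℝ, 0 < η ∧ x = fernEta f η / η ^ μ}

lemma midSet_subset_holderSet : midSet μ f ⊆ holderSet μ f := by
  rintro _ ⟨s, u, hs, hsu, hu, rfl⟩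
  exact ⟨s, (s + u) / 2, u, hs.le, by linarith, by linarith, hu, rfl⟩

lemma midSemi_le_holderSemi (hH : BddAbove (holderSet μ f)) : midSemi μ f ≤ holderSemi μ f :=
  csSup_le_csSup hH ⟨_, 1 / 2, 1, by norm_num, by norm_num, le_rfl, rfl⟩ midSet_subset_holderSet

lemma midSemi_nonneg : 0 ≤ midSemi μ f :=
  Real.sSup_nonneg <| by
    rintro _ ⟨s, u, -, hsu, -, rfl⟩
    exact div_nonneg (le_min dist_nonneg dist_nonneg) (Real.rpow_nonneg (by linarith) μ)

/-- `midSemi` only sees intervals with `0 < s`; right-continuity at `0` recovers `s = 0`. -/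
lemma tripleDelta_mid_le_midSemi (hH : BddAbove (holderSet μ f))
    (hrc : ∀ t ∈ Ico (0 : ℝ) 1, ContinuousWithinAt f (Ici t) t) {s u : ℝ} (hs : 0 ≤ s)
    (hsu : s < u) (hu : u ≤ 1) :
    tripleDelta f s ((s + u) / 2) u ≤ midSemi μ f * (u - s) ^ μ := by
  have hpos : ∀ s ∈ Ioo 0 u, tripleDelta f s ((s + u) / 2) u ≤ midSemi μ f * (u - s) ^ μ :=
    fun s hs => by
      rw [← div_le_iff₀ (Real.rpow_pos_of_pos (sub_pos.mpr hs.2) μ)]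
      exact le_csSup (hH.mono midSet_subset_holderSet) ⟨s, u, hs.1, hs.2, hu, rfl⟩
  rcases hs.eq_or_lt with rfl | hs
  · refine ContinuousWithinAt.closure_le (by rw [closure_Ioo hsu.ne]; exact left_mem_Icc.mpr hsu.le)
      ?_ ?_ hpos
    · have hf0 : ContinuousWithinAt f (Ioo 0 u) 0 :=
        (hrc 0 ⟨le_rfl, zero_lt_one⟩).mono fun s hs => le_of_lt hs.1
      have hfm : ContinuousWithinAt (fun s => f ((s + u) / 2)) (Ioo 0 u) 0 :=
        (hrc ((0 + u) / 2) ⟨by linarith, by linarith⟩).comp (f := fun s : ℝ => (s + u) / 2)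
          (by fun_prop)
          fun s hs => by simp only [mem_Ici]; linarith [hs.1]
      exact (hf0.dist hfm).min (hfm.dist tendsto_const_nhds)
    · exact ((continuousAt_const.sub continuousAt_id).rpow_const
        (Or.inl (sub_ne_zero.mpr hsu.ne'))).continuousWithinAt.const_mul _
  · exact hpos s ⟨hs, hsu⟩

lemma isBounded_image_Icc_of_bddAbove_leftSet (hμ : 0 ≤ μ) (hL : BddAbove (leftSet μ f)) :
    Bornology.IsBounded (f '' Icc 0 1) := by
  obtain ⟨c, hc⟩ := hL
  refine (Metric.isBounded_closedBall (x := f 0) (r := c)).subset ?_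
  rintro _ ⟨t, ⟨ht0, ht1⟩, rfl⟩
  rw [Metric.mem_closedBall, dist_comm]
  rcases ht0.eq_or_lt with rfl | ht0
  · have := hc ⟨1, zero_lt_one, le_rfl, rfl⟩
    rw [dist_self]
    exact this.trans' (div_nonneg dist_nonneg (Real.rpow_nonneg zero_le_one μ))
  · have htμ := Real.rpow_pos_of_pos ht0 μ
    calc dist (f 0) (f t) = dist (f 0) (f t) / t ^ μ * t ^ μ := (div_mul_cancel₀ _ htμ.ne').symm
      _ ≤ dist (f 0) (f t) / t ^ μ := mul_le_of_le_one_right (div_nonneg dist_nonneg htμ.le)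
          (Real.rpow_le_one ht0.le ht1 hμ)
      _ ≤ c := hc ⟨t, ht0, ht1, rfl⟩

lemma fernEta_nonneg (η : ℝ) : 0 ≤ fernEta f η :=
  Real.sSup_nonneg <| by
    rintro _ ⟨σ, τ, -, -, -, -, rfl⟩
    exact fernMod_nonneg σ τ

lemma tildeSemi_nonneg : 0 ≤ tildeSemi μ f :=
  Real.sSup_nonneg <| by
    rintro _ ⟨η, hη, rfl⟩
    exact div_nonneg (fernEta_nonneg η) (Real.rpow_nonneg hη.le μ)

lemma mem_upperBounds_fernSet {K η : ℝ} (hμ : 0 ≤ μ) (hK : 0 ≤ K)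
    (hfern : ∀ σ τ, 0 ≤ σ → σ < τ → τ ≤ 1 → fernMod f σ τ ≤ K * (τ - σ) ^ μ) :
    K * η ^ μ ∈ upperBounds (fernSet f η) := by
  rintro _ ⟨σ, τ, hσ, hστ, hτ, hτσ, rfl⟩
  exact (hfern σ τ hσ hστ hτ).trans
    (mul_le_mul_of_nonneg_left (Real.rpow_le_rpow (by linarith) hτσ hμ) hK)

lemma mem_upperBounds_tildeSet {K : ℝ} (hμ : 0 ≤ μ) (hK : 0 ≤ K)
    (hfern : ∀ σ τ, 0 ≤ σ → σ < τ → τ ≤ 1 → fernMod f σ τ ≤ K * (τ - σ) ^ μ) :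
    K ∈ upperBounds (tildeSet μ f) := by
  rintro _ ⟨η, hη, rfl⟩
  rw [div_le_iff₀ (Real.rpow_pos_of_pos hη μ)]
  exact Real.sSup_le (mem_upperBounds_fernSet hμ hK hfern)
    (mul_nonneg hK (Real.rpow_nonneg hη.le μ))

lemma holderSemi_le_tildeSemi {K : ℝ} (hμ : 0 ≤ μ) (hL : BddAbove (leftSet μ f)) (hK : 0 ≤ K)
    (hfern : ∀ σ τ, 0 ≤ σ → σ < τ → τ ≤ 1 → fernMod f σ τ ≤ K * (τ - σ) ^ μ) :
    holderSemi μ f ≤ tildeSemi μ f := by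
  refine Real.sSup_le ?_ tildeSemi_nonneg
  rintro _ ⟨s, t, u, hs, hst, htu, hu, rfl⟩
  rcases (hst.trans htu).eq_or_lt with rfl | hsu
  · obtain rfl : t = s := le_antisymm htu hst
    simpa [tripleDelta] using tildeSemi_nonneg
  have hb := (isBounded_image_Icc_of_bddAbove_leftSet hμ hL).subset
    (image_mono (Icc_subset_Icc hs hu))
  calc tripleDelta f s t u / (u - s) ^ μ ≤ fernEta f (u - s) / (u - s) ^ μ := by
        gcongr
        exact (tripleDelta_le_fernMod hb hst htu hsu).trans
          (le_csSup ⟨_, mem_upperBounds_fernSet hμ hK hfern⟩ ⟨s, u, hs, hsu, hu, le_rfl, rfl⟩)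
    _ ≤ tildeSemi μ f :=
        le_csSup ⟨_, mem_upperBounds_tildeSet hμ hK hfern⟩ ⟨u - s, sub_pos.mpr hsu, rfl⟩

end Seminorms

theorem stmt4 {E : Type*} [MetricSpace E] (μ : ℝ) (hμ : μ ∈ Set.Ioo (0:ℝ) 1)
    (f : ℝ → E) (hf : MemDHolder μ f) :
    midSemi μ f ≤ holderSemi μ f ∧ holderSemi μ f ≤ 2 * tildeSemi μ f ∧
      2 * tildeSemi μ f ≤ (2 / (1 - 2 ^ (-μ))) * midSemi μ f := by
  obtain ⟨hμ0, -⟩ := hμ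
  obtain ⟨⟨hrc, -⟩, hH, hL, -⟩ := hf
  have hK : 0 ≤ midSemi μ f / (1 - 2 ^ (-μ)) :=
    div_nonneg midSemi_nonneg (one_sub_two_rpow_neg_pos hμ0).le
  have hfern : ∀ σ τ, 0 ≤ σ → σ < τ → τ ≤ 1 →
      fernMod f σ τ ≤ midSemi μ f / (1 - 2 ^ (-μ)) * (τ - σ) ^ μ :=
    fun σ τ hσ hστ hτ => fernMod_le_of_midpoint hμ0 midSemi_nonneg hστ
      (fun t ht => hrc t ⟨hσ.trans ht.1, ht.2.trans_le hτ⟩)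
      fun s u hs hsu hu => tripleDelta_mid_le_midSemi hH hrc (hσ.trans hs) hsu (hu.trans hτ)
  have htilde : tildeSemi μ f ≤ midSemi μ f / (1 - 2 ^ (-μ)) :=
    Real.sSup_le (mem_upperBounds_tildeSet hμ0.le hK hfern) hK
  refine ⟨midSemi_le_holderSemi hH, ?_, ?_⟩
  · linarith [holderSemi_le_tildeSemi hμ0.le hL hK hfern, tildeSemi_nonneg (μ := μ) (f := f)]
  · rw [div_mul_eq_mul_div, mul_div_assoc]
    gcongr
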